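/- Let κ > 0, Φ₀ ≥ 0, L > 0, d ≥ 1, and ρ̄ the mean of the truncated Gaussian stationary state: ρ̄ = Φ₀/L^d + √2 exp(−(κ/2)Φ₀²)/(L^d √(πκ)(1 + erf(Φ₀√κ/√2))). Then L^d ρ̄² κ = (2/L^d)(f(η) + η)² with η = √(κ/2) Φ₀ and f(η) = (1/√π) exp(−η²)/(1 + erf(η)). Consequently, L^d ρ̄² κ > 1/L^d − L^d ρ̄ (ρ̄ − Φ₀/L^d) κ, i.e. 2(f(η)+η)² > g(η), where g(η) = 1 − 2 f(η)(f(η)+η). -/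

import Mathlib

open Real MeasureTheory

noncomputable def erf (z : ℝ) : ℝ := (2 / Real.sqrt π) * ∫ s in (0:ℝ)..z, Real.exp (-s^2)

noncomputable def f (η : ℝ) : ℝ := (1 / Real.sqrt π) * Real.exp (-η^2) / (1 + erf η)

noncomputable def g (η : ℝ) : ℝ := 1 - 2 * f η * (f η + η)

/-! With `c = √(2/κ)` one has `Φ₀ = c η` and `ρ̄ = c (f η + η) / L^d`, so every claim reduces to
`1 < 2 (f η + η) (2 f η + η)`. From `exp (-η²) ≥ 1 - η²`, `√π erf η ≤ 2η` and `√π < 2` one gets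
`f η > (1 - η) / 2`, hence `f η + η > (1 + η) / 2` and `2 f η + η > 1`. -/

lemma erf_nonneg {η : ℝ} (hη : 0 ≤ η) : 0 ≤ erf η :=
  mul_nonneg (by positivity) <|
    intervalIntegral.integral_nonneg hη fun _ _ ↦ (Real.exp_pos _).le

lemma sqrt_pi_mul_erf_le {η : ℝ} (hη : 0 ≤ η) : √π * erf η ≤ 2 * η := by
  have hint : ∫ s in (0:ℝ)..η, Real.exp (-s^2) ≤ η := by
    simpa using intervalIntegral.integral_mono_on (μ := volume) hη
      ((by fun_prop : Continuous fun s : ℝ ↦ Real.exp (-s^2)).intervalIntegrable _ _)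
      intervalIntegrable_const
      fun s _ ↦ Real.exp_le_one_iff.mpr (neg_nonpos.mpr (sq_nonneg s))
  have hπ : √π ≠ 0 := (Real.sqrt_pos.mpr pi_pos).ne'
  rw [erf, ← mul_assoc, mul_div_cancel₀ 2 hπ]
  linarith

lemma one_add_erf_pos {η : ℝ} (hη : 0 ≤ η) : 0 < 1 + erf η := by
  linarith [erf_nonneg hη]

lemma f_pos {η : ℝ} (hη : 0 ≤ η) : 0 < f η := by
  have := one_add_erf_pos hη
  unfold f; positivity

lemma f_eq_exp_div (η : ℝ) : f η = Real.exp (-η^2) / (√π * (1 + erf η)) := by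
  rw [f, one_div_mul_eq_div, div_div]

lemma one_sub_div_two_lt_f {η : ℝ} (hη : 0 ≤ η) : (1 - η) / 2 < f η := by
  rcases le_or_gt 1 η with h1 | h1
  · linarith [f_pos hη]
  have hsπ : 0 < √π := Real.sqrt_pos.mpr pi_pos
  have hsπ2 : √π < 2 := (Real.sqrt_lt' two_pos).mpr (by linarith [pi_lt_four])
  have hD : √π * (1 + erf η) < 2 * (1 + η) := by linarith [sqrt_pi_mul_erf_le hη]
  have hexp : 1 - η^2 ≤ Real.exp (-η^2) := by linarith [Real.add_one_le_exp (-η^2)]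
  rw [f_eq_exp_div, lt_div_iff₀ (mul_pos hsπ (one_add_erf_pos hη))]
  nlinarith [mul_lt_mul_of_pos_left hD (sub_pos.mpr h1)]

lemma half_lt_f_add_mul_two_f_add {η : ℝ} (hη : 0 ≤ η) : 1 / 2 < (f η + η) * (2 * f η + η) := by
  have hf := one_sub_div_two_lt_f hη
  nlinarith [f_pos hη]

lemma g_lt_two_mul_sq {η : ℝ} (hη : 0 ≤ η) : g η < 2 * (f η + η)^2 := by
  rw [g]; linarith [half_lt_f_add_mul_two_f_add hη]

lemma eq_sqrt_two_div_mul_of_eq_sqrt_div_two_mul {κ Φ₀ η : ℝ} (hκ : 0 < κ)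
    (hη : η = √(κ / 2) * Φ₀) : Φ₀ = √(2 / κ) * η := by
  rw [hη, ← mul_assoc, ← Real.sqrt_mul (by positivity), div_mul_div_comm, mul_comm 2 κ,
    div_self (by positivity), Real.sqrt_one, one_mul]

lemma sq_sqrt_two_div_mul {κ : ℝ} (hκ : 0 < κ) : √(2 / κ) ^ 2 * κ = 2 := by
  rw [Real.sq_sqrt (by positivity), div_mul_cancel₀ 2 hκ.ne']

lemma stationary_mean_eq {κ Φ₀ η : ℝ} (A : ℝ) (hκ : 0 < κ) (hη : η = √(κ / 2) * Φ₀) :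
    Φ₀ / A + √2 * Real.exp (-(κ/2) * Φ₀^2) /
        (A * √(π * κ) * (1 + erf (Φ₀ * √κ / √2))) = √(2 / κ) * (f η + η) / A := by
  have hΦ := eq_sqrt_two_div_mul_of_eq_sqrt_div_two_mul hκ hη
  have harg : Φ₀ * √κ / √2 = η := by
    rw [hη, Real.sqrt_div' κ two_pos.le]; ring
  have hexp : -(κ/2) * Φ₀^2 = -η^2 := by
    rw [hη, mul_pow, Real.sq_sqrt (by positivity)]; ring
  rw [harg, hexp, Real.sqrt_mul pi_pos.le, f_eq_exp_div]
  nth_rewrite 1 [hΦ]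
  rw [Real.sqrt_div' 2 hκ.le]
  generalize 1 + erf η = E
  ring

theorem stmt13_general (κ Φ₀ L : ℝ) (d : ℕ) (hκ : 0 < κ) (hΦ : 0 ≤ Φ₀) (hL : 0 < L)
    (ρbar : ℝ)
    (hρbar : ρbar = Φ₀ / L^d +
      Real.sqrt 2 * Real.exp (-(κ/2) * Φ₀^2) /
        (L^d * Real.sqrt (π * κ) * (1 + erf (Φ₀ * Real.sqrt κ / Real.sqrt 2))))
    (η : ℝ) (hη : η = Real.sqrt (κ / 2) * Φ₀) :
    L^d * ρbar^2 * κ = (2 / L^d) * (f η + η)^2 ∧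
    1 / L^d - L^d * ρbar * (ρbar - Φ₀ / L^d) * κ < L^d * ρbar^2 * κ ∧
    g η < 2 * (f η + η)^2 := by
  have hA : 0 < L^d := by positivity
  have hηnn : 0 ≤ η := hη ▸ mul_nonneg (Real.sqrt_nonneg _) hΦ
  have hΦη := eq_sqrt_two_div_mul_of_eq_sqrt_div_two_mul hκ hη
  have hρ : ρbar = √(2 / κ) * (f η + η) / L^d := hρbar.trans (stationary_mean_eq _ hκ hη)
  have hc := sq_sqrt_two_div_mul hκ
  have h1 : L^d * ρbar^2 * κ = (2 / L^d) * (f η + η)^2 := by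
    rw [hρ]
    field_simp
    linear_combination (f η + η)^2 * hc
  have h2 : L^d * ρbar * (ρbar - Φ₀ / L^d) * κ = 2 * f η * (f η + η) / L^d := by
    rw [hρ, hΦη]
    field_simp
    linear_combination f η * (f η + η) * hc
  have h3 := g_lt_two_mul_sq hηnn
  refine ⟨h1, ?_, h3⟩
  rw [h1, h2, ← sub_div, div_mul_eq_mul_div]
  exact (div_lt_div_iff_of_pos_right hA).mpr h3

theorem stmt13 (κ Φ₀ L : ℝ) (d : ℕ) (hκ : 0 < κ) (hΦ : 0 ≤ Φ₀) (hL : 0 < L) (hd : 1 ≤ d)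
    (ρbar : ℝ)
    (hρbar : ρbar = Φ₀ / L^d +
      Real.sqrt 2 * Real.exp (-(κ/2) * Φ₀^2) /
        (L^d * Real.sqrt (π * κ) * (1 + erf (Φ₀ * Real.sqrt κ / Real.sqrt 2))))
    (η : ℝ) (hη : η = Real.sqrt (κ / 2) * Φ₀) :
    L^d * ρbar^2 * κ = (2 / L^d) * (f η + η)^2 ∧
    1 / L^d - L^d * ρbar * (ρbar - Φ₀ / L^d) * κ < L^d * ρbar^2 * κ ∧
    g η < 2 * (f η + η)^2 :=
  stmt13_general κ Φ₀ L d hκ hΦ hL ρbar hρbar η hη
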